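/- arXiv:2502.05955 — 6 statements merged into one kernel-verified Lean document; each statement's English description precedes it below -/
import Mathlib

section
/- Let 0 < α₀ < π/2 and let α ∈ [−α₀, α₀]. Then for every real t, √(1 + cos²(α)·t²) ≥ √(1 − cos²(α₀)sec²(α)) + cos(α₀)·t, where sec(α) = 1/cos(α). -/
open Real

theorem stmt1 (α₀ α t : ℝ) (h0 : 0 < α₀) (h1 : α₀ < π / 2)
    (hα : α ∈ Set.Icc (-α₀) α₀) :
    Real.sqrt (1 + Real.cos α ^ 2 * t ^ 2) ≥
      Real.sqrt (1 - Real.cos α₀ ^ 2 * (1 / Real.cos α) ^ 2) + Real.cos α₀ * t := by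
  obtain ⟨ha1, ha2⟩ := hα
  have hk : 0 < Real.cos α₀ :=
    Real.cos_pos_of_mem_Ioo ⟨by linarith [Real.pi_pos], h1⟩
  have hc : Real.cos α₀ ≤ Real.cos α := by
    rcases le_or_gt 0 α with h | h
    · exact Real.cos_le_cos_of_nonneg_of_le_pi h (by linarith [Real.pi_pos]) ha2
    · rw [← Real.cos_neg α]
      exact Real.cos_le_cos_of_nonneg_of_le_pi (by linarith) (by linarith [Real.pi_pos])
        (by linarith)
  have hc0 : 0 < Real.cos α := lt_of_lt_of_le hk hc
  set c := Real.cos α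
  set k := Real.cos α₀
  have hnn : 0 ≤ 1 - k ^ 2 * (1 / c) ^ 2 := by
    rw [div_pow, one_pow]
    have : k ^ 2 ≤ c ^ 2 := by nlinarith
    have h2 : k ^ 2 / c ^ 2 ≤ 1 := by
      rw [div_le_one (by positivity)]; exact this
    rw [mul_one_div]; linarith [h2]
  set s := Real.sqrt (1 - k ^ 2 * (1 / c) ^ 2) with hs
  have hs0 : 0 ≤ s := Real.sqrt_nonneg _
  have hs2 : s ^ 2 = 1 - k ^ 2 * (1 / c) ^ 2 := Real.sq_sqrt hnn
  rcases le_or_gt (s + k * t) 0 with h | h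
  · have := Real.sqrt_nonneg (1 + c ^ 2 * t ^ 2)
    linarith
  · rw [ge_iff_le, ← Real.sqrt_sq h.le]
    apply Real.sqrt_le_sqrt
    have key : (s * c * t - k / c) ^ 2 ≥ 0 := sq_nonneg _
    have hc2 : c ^ 2 ≠ 0 := by positivity
    have hs2' : s ^ 2 * c ^ 2 = c ^ 2 - k ^ 2 := by
      field_simp at hs2 ⊢
      nlinarith [hs2]
    nlinarith [sq_nonneg (s * c ^ 2 * t - k), hs2', mul_pos hc0 hc0, sq_nonneg (s + k * t), mul_pos (mul_pos hc0 hc0) (mul_pos hc0 hc0)]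
end

section
/- Let 0 < α₀ < π/2 and let θ: [−α₀, α₀] × [0, 2π] → ℝ be a C¹ function with θ(−α₀, β) = 0 and θ(α₀, β) = π for all β. Writing θ₂ = ∂θ/∂α, one has ∫₀^{2π} ∫_{−α₀}^{α₀} √(1 + cos²(α)·θ₂(α,β)²) dα dβ ≥ K_{α₀} + 2π²·cos(α₀), where K_{α₀} = ∫₀^{2π} ∫_{−α₀}^{α₀} √(1 − cos²(α₀)/cos²(α)) dα dβ. -/
/-!
Write `θ₂` for `∂θ/∂α` and `v = cos α₀ / cos α ∈ (0, 1]`. Cauchy–Schwarz for `(√(1 - v²), v)` and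
`(1, cos α · θ₂)` gives the pointwise bound `√(1 - v²) + cos α₀ · θ₂ ≤ √(1 + cos² α · θ₂²)`.
Integrating in `α`, the boundary values turn `∫ θ₂ dα` into `θ(α₀, β) - θ(-α₀, β) = π`, so every
meridian contributes at least its share of `K_{α₀}` plus `π cos α₀`; integrating in `β` gives the
claim.
-/

open Real Set

theorem sqrt_one_sub_sq_add_mul_le_sqrt_one_add_sq {v : ℝ} (hv : v ^ 2 ≤ 1) (s : ℝ) :
    √(1 - v ^ 2) + v * s ≤ √(1 + s ^ 2) := by
  set u := √(1 - v ^ 2)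
  have hu : u ^ 2 = 1 - v ^ 2 := sq_sqrt (by linarith)
  -- Lagrange's identity: `(u + v s)² + (u s - v)² = (u² + v²)(1 + s²)`
  have hsq : (u + v * s) ^ 2 ≤ 1 + s ^ 2 := by nlinarith [sq_nonneg (s * u - v)]
  calc u + v * s ≤ |u + v * s| := le_abs_self _
    _ = √((u + v * s) ^ 2) := (sqrt_sq_eq_abs _).symm
    _ ≤ √(1 + s ^ 2) := sqrt_le_sqrt hsq

theorem cos_le_cos_of_abs_le {α α₀ : ℝ} (hα : |α| ≤ α₀) (hα₀ : α₀ ≤ π) : cos α₀ ≤ cos α := by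
  rw [← cos_abs α]
  exact cos_le_cos_of_nonneg_of_le_pi (abs_nonneg α) hα₀ hα

theorem sqrt_one_sub_cos_sq_div_add_le {α α₀ : ℝ} (hα : |α| ≤ α₀) (hα₀ : α₀ < π / 2) (t : ℝ) :
    √(1 - cos α₀ ^ 2 / cos α ^ 2) + cos α₀ * t ≤ √(1 + cos α ^ 2 * t ^ 2) := by
  have hcos : 0 < cos α := cos_pos_of_mem_Ioo (abs_lt.1 (hα.trans_lt hα₀))
  have hcos₀ : 0 ≤ cos α₀ := cos_nonneg_of_mem_Icc ⟨by linarith [abs_nonneg α], hα₀.le⟩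
  have hle : cos α₀ / cos α ≤ 1 :=
    (div_le_one hcos).2 (cos_le_cos_of_abs_le hα (by linarith [pi_pos]))
  have hv : (cos α₀ / cos α) ^ 2 ≤ 1 := pow_le_one₀ (div_nonneg hcos₀ hcos.le) hle
  have := sqrt_one_sub_sq_add_mul_le_sqrt_one_add_sq hv (cos α * t)
  rwa [div_pow, ← mul_assoc, div_mul_cancel₀ _ hcos.ne', mul_pow] at this

theorem integral_sqrt_one_sub_cos_sq_div_add_le {α₀ : ℝ} (h0 : 0 ≤ α₀) (h1 : α₀ < π / 2)
    {f : ℝ → ℝ} (hf : ContDiff ℝ 1 f) :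
    (∫ α in (-α₀)..α₀, √(1 - cos α₀ ^ 2 / cos α ^ 2)) + cos α₀ * (f α₀ - f (-α₀)) ≤
      ∫ α in (-α₀)..α₀, √(1 + cos α ^ 2 * deriv f α ^ 2) := by
  have hle : -α₀ ≤ α₀ := by linarith
  have hf' : Continuous (deriv f) := hf.continuous_deriv le_rfl
  have hK : IntervalIntegrable (fun α => √(1 - cos α₀ ^ 2 / cos α ^ 2)) MeasureTheory.volume
      (-α₀) α₀ := by
    refine ContinuousOn.intervalIntegrable (ContinuousOn.sqrt (continuousOn_const.sub
      (continuousOn_const.div (by fun_prop) fun α hα => ?_)))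
    rw [uIcc_of_le hle] at hα
    exact pow_ne_zero 2 (cos_pos_of_mem_Ioo (abs_lt.1 ((abs_le.2 hα).trans_lt h1))).ne'
  have hftc : ∫ α in (-α₀)..α₀, deriv f α = f α₀ - f (-α₀) :=
    intervalIntegral.integral_deriv_eq_sub (fun x _ => hf.differentiable one_ne_zero x)
      (hf'.intervalIntegrable _ _)
  have hθ₂ : IntervalIntegrable (fun α => cos α₀ * deriv f α) MeasureTheory.volume (-α₀) α₀ :=
    (continuous_const.mul hf').intervalIntegrable _ _
  rw [← hftc, ← intervalIntegral.integral_const_mul, ← intervalIntegral.integral_add hK hθ₂]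
  exact intervalIntegral.integral_mono_on hle (hK.add hθ₂)
    ((by fun_prop : Continuous _).intervalIntegrable _ _)
    fun α hα => sqrt_one_sub_cos_sq_div_add_le (abs_le.2 hα) h1 _

theorem deriv_comp_prodMk_left {θ : ℝ × ℝ → ℝ} (hθ : Differentiable ℝ θ) (α β : ℝ) :
    deriv (fun a => θ (a, β)) α = fderiv ℝ θ (α, β) (1, 0) :=
  ((hθ (α, β)).hasFDerivAt.comp_hasDerivAt α
    ((hasDerivAt_id α).prodMk (hasDerivAt_const α β))).deriv

theorem continuous_deriv_comp_prodMk_left {θ : ℝ × ℝ → ℝ} (hθ : ContDiff ℝ 1 θ) :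
    Continuous fun p : ℝ × ℝ => deriv (fun a => θ (a, p.1)) p.2 := by
  simp only [deriv_comp_prodMk_left (hθ.differentiable one_ne_zero)]
  exact ((hθ.continuous_fderiv one_ne_zero).comp continuous_swap).clm_apply continuous_const

theorem stmt5 (α₀ : ℝ) (h0 : 0 < α₀) (h1 : α₀ < π / 2)
    (θ : ℝ × ℝ → ℝ) (hC1 : ContDiff ℝ 1 θ)
    (hbd1 : ∀ β ∈ Set.Icc (0 : ℝ) (2 * π), θ (-α₀, β) = 0)
    (hbd2 : ∀ β ∈ Set.Icc (0 : ℝ) (2 * π), θ (α₀, β) = π) :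
    (∫ β in (0 : ℝ)..(2 * π), ∫ α in (-α₀)..α₀,
        Real.sqrt (1 + Real.cos α ^ 2 * (deriv (fun a => θ (a, β)) α) ^ 2)) ≥
      (∫ β in (0 : ℝ)..(2 * π), ∫ α in (-α₀)..α₀,
        Real.sqrt (1 - Real.cos α₀ ^ 2 / Real.cos α ^ 2)) +
      2 * π ^ 2 * Real.cos α₀ := by
  have hcont := continuous_deriv_comp_prodMk_left hC1
  have hmeridian (β : ℝ) (hβ : β ∈ Icc 0 (2 * π)) :
      (∫ α in (-α₀)..α₀, √(1 - cos α₀ ^ 2 / cos α ^ 2)) + π * cos α₀ ≤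
        ∫ α in (-α₀)..α₀, √(1 + cos α ^ 2 * deriv (fun a => θ (a, β)) α ^ 2) := by
    have := integral_sqrt_one_sub_cos_sq_div_add_le (f := fun a => θ (a, β)) h0.le h1
      (hC1.comp (by fun_prop))
    rwa [hbd1 β hβ, hbd2 β hβ, sub_zero, mul_comm] at this
  have hcontLHS : Continuous fun β =>
      ∫ α in (-α₀)..α₀, √(1 + cos α ^ 2 * deriv (fun a => θ (a, β)) α ^ 2) :=
    intervalIntegral.continuous_parametric_intervalIntegral_of_continuous' (by fun_prop) _ _
  rw [ge_iff_le]
  calc _ = ∫ β in (0 : ℝ)..(2 * π),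
        (∫ α in (-α₀)..α₀, √(1 - cos α₀ ^ 2 / cos α ^ 2)) + π * cos α₀ := by
        simp only [intervalIntegral.integral_const, smul_eq_mul]
        ring
    _ ≤ _ := intervalIntegral.integral_mono_on (by positivity) intervalIntegrable_const
        (hcontLHS.intervalIntegrable _ _) hmeridian
end

section
/- Let 0 < α₀ < π/2 and define θ(α) = arcsin(cot(α₀)·tan(α)) + π/2. Then for every α ∈ (−α₀, α₀), √(1 + cos²(α)·θ'(α)²) = √(1 − cos²(α₀)/cos²(α)) + cos(α₀)·θ'(α), i.e., the pointwise inequality of the area lower bound is an equality for this θ. -/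
open Real

set_option maxHeartbeats 1600000 in
theorem stmt6 (α₀ : ℝ) (h0 : 0 < α₀) (h1 : α₀ < π / 2)
    (θ : ℝ → ℝ)
    (hθ : ∀ α, θ α = Real.arcsin (Real.cos α₀ / Real.sin α₀ * Real.tan α) + π / 2) :
    ∀ α ∈ Set.Ioo (-α₀) α₀,
      Real.sqrt (1 + Real.cos α ^ 2 * (deriv θ α) ^ 2) =
        Real.sqrt (1 - Real.cos α₀ ^ 2 / Real.cos α ^ 2) + Real.cos α₀ * deriv θ α := by
  have hθ' : θ = fun α => Real.arcsin (Real.cos α₀ / Real.sin α₀ * Real.tan α) + π / 2 :=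
    funext hθ
  subst hθ'
  intro α hα
  have hπ := Real.pi_pos
  have hs0 : 0 < Real.sin α₀ := Real.sin_pos_of_pos_of_lt_pi h0 (by linarith)
  have hc00 : 0 < Real.cos α₀ := Real.cos_pos_of_mem_Ioo ⟨by linarith, h1⟩
  have hαlt : |α| < α₀ := abs_lt.mpr ⟨by linarith [hα.1], hα.2⟩
  have hcosα : Real.cos α₀ < Real.cos α := by
    rw [← Real.cos_abs α]
    exact Real.cos_lt_cos_of_nonneg_of_le_pi (abs_nonneg α) (by linarith) hαlt
  have hcosα0 : 0 < Real.cos α := lt_trans hc00 hcosα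
  have hcosne : Real.cos α ≠ 0 := ne_of_gt hcosα0
  have hpyth := Real.sin_sq_add_cos_sq α
  have hpyth0 := Real.sin_sq_add_cos_sq α₀
  have hsin2 : Real.sin α ^ 2 < Real.sin α₀ ^ 2 := by nlinarith
  set k := Real.sqrt (Real.sin α₀ ^ 2 - Real.sin α ^ 2) with hkdef
  have hk2 : k ^ 2 = Real.sin α₀ ^ 2 - Real.sin α ^ 2 :=
    Real.sq_sqrt (by nlinarith)
  have hk0 : 0 < k := Real.sqrt_pos.mpr (by nlinarith)
  set x := Real.cos α₀ / Real.sin α₀ * Real.tan α with hxdef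
  have h1x : 1 - x ^ 2 = (k / (Real.sin α₀ * Real.cos α)) ^ 2 := by
    rw [hxdef, Real.tan_eq_sin_div_cos]
    field_simp
    nlinarith [hk2]
  have hxlt : x ^ 2 < 1 := by
    have hp : (0:ℝ) < (k / (Real.sin α₀ * Real.cos α)) ^ 2 :=
      pow_pos (div_pos hk0 (mul_pos hs0 hcosα0)) 2
    linarith
  have hx1 : x ≠ 1 := by intro h; rw [h] at hxlt; norm_num at hxlt
  have hx2 : x ≠ -1 := by intro h; rw [h] at hxlt; norm_num at hxlt
  have hsq1x : Real.sqrt (1 - x ^ 2) = k / (Real.sin α₀ * Real.cos α) := by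
    rw [h1x, Real.sqrt_sq (le_of_lt (div_pos hk0 (mul_pos hs0 hcosα0)))]
  -- derivative computation
  have htan : HasDerivAt (fun a => Real.cos α₀ / Real.sin α₀ * Real.tan a)
      (Real.cos α₀ / Real.sin α₀ * (1 / Real.cos α ^ 2)) α :=
    (Real.hasDerivAt_tan hcosne).const_mul _
  have harcsin : HasDerivAt Real.arcsin (1 / Real.sqrt (1 - x ^ 2)) x :=
    Real.hasDerivAt_arcsin hx2 hx1
  have hcomp : HasDerivAt (fun a => Real.arcsin (Real.cos α₀ / Real.sin α₀ * Real.tan a) + π / 2)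
      (1 / Real.sqrt (1 - x ^ 2) * (Real.cos α₀ / Real.sin α₀ * (1 / Real.cos α ^ 2))) α :=
    (harcsin.comp α htan).add_const _
  have hD : deriv (fun a => Real.arcsin (Real.cos α₀ / Real.sin α₀ * Real.tan a) + π / 2) α
      = Real.cos α₀ / (Real.cos α * k) := by
    rw [hcomp.deriv, hsq1x]
    field_simp
  rw [hD]
  clear_value k x
  clear hθ hcomp harcsin htan hD hsq1x h1x hxlt hx1 hx2 hxdef x hkdef hαlt hα
  have hkc : k ^ 2 = Real.cos α ^ 2 - Real.cos α₀ ^ 2 := by nlinarith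
  have e1 : 1 + Real.cos α ^ 2 * (Real.cos α₀ / (Real.cos α * k)) ^ 2
      = (Real.cos α / k) ^ 2 := by
    field_simp
    nlinarith
  have e2 : 1 - Real.cos α₀ ^ 2 / Real.cos α ^ 2 = (k / Real.cos α) ^ 2 := by
    field_simp
    nlinarith
  rw [e1, e2, Real.sqrt_sq (le_of_lt (div_pos hcosα0 hk0)),
    Real.sqrt_sq (le_of_lt (div_pos hk0 hcosα0))]
  field_simp
  nlinarith [hkc, mul_pos hcosα0 hk0, mul_pos (mul_pos hcosα0 hk0) hk0,
    mul_pos (mul_pos hcosα0 hk0) hcosα0]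
end

section
/- Let 0 < α₀ < π/2, α ∈ [−α₀, α₀] with cos(α) > 0, and t ∈ ℝ. Equality √(1 + cos²(α)·t²) = √(1 − cos²(α₀)/cos²(α)) + cos(α₀)·t holds if and only if √(1 − cos²(α₀)/cos²(α))·cos(α)·t = cos(α₀)/cos(α). -/
/-!
Writing `c = cos α`, `c₀ = cos α₀`, the constraint `|α| ≤ α₀ < π/2` gives `c₀ ≤ c`,
so `(√(1 - c₀²/c²), c₀/c)` is a unit vector. The equation is the equality case of
Cauchy–Schwarz between this vector and `(1, c t)`, and Lagrange's identity
`(a x + b y)² + (a y - b x)² = (a² + b²)(x² + y²)` turns that into `a y = b x`.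
-/

open Real

theorem sqrt_sq_add_sq_eq_iff_of_sq_add_sq_eq_one {a b x y : ℝ} (hab : a ^ 2 + b ^ 2 = 1)
    (ha : 0 ≤ a) (hx : 0 < x) :
    √(x ^ 2 + y ^ 2) = a * x + b * y ↔ a * y = b * x := by
  have lagrange : (a * x + b * y) ^ 2 + (a * y - b * x) ^ 2 = x ^ 2 + y ^ 2 := by
    linear_combination (x ^ 2 + y ^ 2) * hab
  constructor
  · intro h
    have hsq : (a * x + b * y) ^ 2 = x ^ 2 + y ^ 2 := by
      rw [← h, sq_sqrt (by positivity)]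
    have : (a * y - b * x) ^ 2 = 0 := by linarith
    linarith [pow_eq_zero_iff (n := 2) two_ne_zero |>.mp this]
  · intro h
    have hmul : a * (a * x + b * y) = x := by linear_combination x * hab + b * h
    have hpos : 0 ≤ a * x + b * y :=
      nonneg_of_mul_nonneg_right (hmul.symm ▸ hx.le) (ha.lt_of_ne (by rintro rfl; simp_all))
    rw [← lagrange, sub_eq_zero.mpr h, zero_pow two_ne_zero, add_zero, sqrt_sq hpos]

theorem stmt7_general (α₀ α t : ℝ) (h1 : α₀ < π / 2)
    (hα : α ∈ Set.Icc (-α₀) α₀) (hc : 0 < Real.cos α) :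
    Real.sqrt (1 + Real.cos α ^ 2 * t ^ 2) =
        Real.sqrt (1 - Real.cos α₀ ^ 2 / Real.cos α ^ 2) + Real.cos α₀ * t ↔
      Real.sqrt (1 - Real.cos α₀ ^ 2 / Real.cos α ^ 2) * Real.cos α * t =
        Real.cos α₀ / Real.cos α := by
  obtain ⟨hl, hr⟩ := hα
  have hc₀ : 0 ≤ cos α₀ := cos_nonneg_of_mem_Icc ⟨by linarith [pi_pos], h1.le⟩
  have hle : cos α₀ ≤ cos α := by
    rw [← cos_abs α]
    exact cos_le_cos_of_nonneg_of_le_pi (abs_nonneg α) (by linarith [pi_pos])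
      (abs_le.mpr ⟨hl, hr⟩)
  have hratio : cos α₀ ^ 2 / cos α ^ 2 ≤ 1 :=
    div_le_one_of_le₀ (pow_le_pow_left₀ hc₀ hle 2) (sq_nonneg _)
  have hunit : √(1 - cos α₀ ^ 2 / cos α ^ 2) ^ 2 + (cos α₀ / cos α) ^ 2 = 1 := by
    rw [sq_sqrt (by linarith), div_pow]
    ring
  have key := sqrt_sq_add_sq_eq_iff_of_sq_add_sq_eq_one (y := cos α * t) hunit (sqrt_nonneg _)
    one_pos
  have hcancel : cos α₀ / cos α * (cos α * t) = cos α₀ * t := by field_simp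
  rwa [one_pow, mul_pow, mul_one, mul_one, hcancel, ← mul_assoc] at key

theorem stmt7 (α₀ α t : ℝ) (h0 : 0 < α₀) (h1 : α₀ < π / 2)
    (hα : α ∈ Set.Icc (-α₀) α₀) (hc : 0 < Real.cos α) :
    Real.sqrt (1 + Real.cos α ^ 2 * t ^ 2) =
        Real.sqrt (1 - Real.cos α₀ ^ 2 / Real.cos α ^ 2) + Real.cos α₀ * t ↔
      Real.sqrt (1 - Real.cos α₀ ^ 2 / Real.cos α ^ 2) * Real.cos α * t =
        Real.cos α₀ / Real.cos α :=
  stmt7_general α₀ α t h1 hα hc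
end

section
/- For 0 < α₀ < π/2, an antiderivative of α ↦ cos(α₀)/(cos²(α)·√(1 − cos²(α₀)/cos²(α))) on (−α₀, α₀) is α ↦ arcsin(cot(α₀)·tan(α)). -/
/-! With `k = cot α₀` the chain rule gives the derivative `k / (cos² α · √(1 - k² tan² α))`.
Using `sin² = 1 - cos²` for both angles, `1 - k² tan² α = (1 - cos² α₀ / cos² α) / sin² α₀`,
which is positive because `cos α₀ < cos α` for `|α| < α₀`; after taking square roots the
factor `sin α₀` cancels against the one in `k`. -/

open Real

theorem hasDerivAt_arcsin_const_mul_tan {k α : ℝ} (hcos : cos α ≠ 0)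
    (hk : |k * tan α| < 1) :
    HasDerivAt (fun a => arcsin (k * tan a))
      (k / (cos α ^ 2 * √(1 - (k * tan α) ^ 2))) α := by
  obtain ⟨hgt, hlt⟩ := abs_lt.1 hk
  refine ((hasDerivAt_arcsin hgt.ne' hlt.ne).comp α
    ((hasDerivAt_tan hcos).const_mul k)).congr_deriv ?_
  ring

theorem one_sub_cot_mul_tan_sq {α β : ℝ} (hsin : sin β ≠ 0) (hcos : cos α ≠ 0) :
    1 - (cos β / sin β * tan α) ^ 2 = (1 - cos β ^ 2 / cos α ^ 2) / sin β ^ 2 := by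
  rw [tan_eq_sin_div_cos]
  field_simp
  linear_combination cos α ^ 2 * sin_sq β - cos β ^ 2 * sin_sq α

theorem cos_lt_cos_of_abs_lt {α β : ℝ} (h : |α| < β) (hβ : β ≤ π) : cos β < cos α := by
  rw [← cos_abs α]
  exact cos_lt_cos_of_nonneg_of_le_pi (abs_nonneg α) hβ h

theorem one_sub_cos_sq_div_cos_sq_pos {α β : ℝ} (h : |α| < β) (hβ : β < π / 2) :
    0 < 1 - cos β ^ 2 / cos α ^ 2 := by
  have hβ₀ : 0 < β := (abs_nonneg α).trans_lt h
  have hcosβ : 0 < cos β := cos_pos_of_mem_Ioo ⟨by linarith [pi_pos], hβ⟩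
  have hlt : cos β < cos α := cos_lt_cos_of_abs_lt h (by linarith [pi_pos])
  rw [sub_pos, div_lt_one (by nlinarith)]
  nlinarith

theorem stmt8_general (α₀ : ℝ) (h1 : α₀ < π / 2) :
    ∀ α ∈ Set.Ioo (-α₀) α₀,
      HasDerivAt (fun a => Real.arcsin (Real.cos α₀ / Real.sin α₀ * Real.tan a))
        (Real.cos α₀ /
          (Real.cos α ^ 2 * Real.sqrt (1 - Real.cos α₀ ^ 2 / Real.cos α ^ 2))) α := by
  intro α hα
  have habs : |α| < α₀ := abs_lt.2 hα
  have hsin : 0 < sin α₀ :=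
    sin_pos_of_pos_of_lt_pi ((abs_nonneg α).trans_lt habs) (by linarith [pi_pos])
  have hcos : cos α ≠ 0 :=
    (cos_pos_of_mem_Ioo ⟨by linarith [pi_pos, hα.1], by linarith [hα.2]⟩).ne'
  have hpos := one_sub_cos_sq_div_cos_sq_pos habs h1
  have hsq := one_sub_cot_mul_tan_sq hsin.ne' hcos
  have hlt : |cos α₀ / sin α₀ * tan α| < 1 := by
    rw [← sq_lt_one_iff_abs_lt_one, ← sub_pos, hsq]
    positivity
  convert hasDerivAt_arcsin_const_mul_tan hcos hlt using 1
  rw [hsq, sqrt_div' _ (sq_nonneg _), sqrt_sq hsin.le]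
  field_simp

theorem stmt8 (α₀ : ℝ) (h0 : 0 < α₀) (h1 : α₀ < π / 2) :
    ∀ α ∈ Set.Ioo (-α₀) α₀,
      HasDerivAt (fun a => Real.arcsin (Real.cos α₀ / Real.sin α₀ * Real.tan a))
        (Real.cos α₀ /
          (Real.cos α ^ 2 * Real.sqrt (1 - Real.cos α₀ ^ 2 / Real.cos α ^ 2))) α :=
  stmt8_general α₀ h1
end

section
/- For any a, b ≥ 0 with a² + b² defined, √(a² + b²) ≥ a with equality iff b = 0; consequently, for 0 < α₀ < π/2, |α| ≤ α₀, and t ∈ ℝ with √(1 − cos²(α₀)/cos²(α)) + cos(α₀)t ≥ 0, equality √(1 + cos²(α)t²) = √(1 − cos²(α₀)/cos²(α)) + cos(α₀)t holds iff cos(α₀)/cos(α) = √(1 − cos²(α₀)/cos²(α))·cos(α)·t. -/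
open Real

theorem key17 (a b : ℝ) (ha : 0 ≤ a) (hb : 0 ≤ b) :
    Real.sqrt (a ^ 2 + b ^ 2) ≥ a ∧ (Real.sqrt (a ^ 2 + b ^ 2) = a ↔ b = 0) := by
  constructor
  · calc Real.sqrt (a ^ 2 + b ^ 2) ≥ Real.sqrt (a ^ 2) := by
          apply Real.sqrt_le_sqrt; nlinarith
      _ = a := by rw [Real.sqrt_sq ha]
  · constructor
    · intro h
      have h2 : a ^ 2 + b ^ 2 = a ^ 2 := by
        have := congrArg (· ^ 2) h
        simpa [Real.sq_sqrt (by positivity : (0:ℝ) ≤ a ^ 2 + b ^ 2)] using this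
      nlinarith
    · intro h; rw [h]; simpa using Real.sqrt_sq ha

theorem stmt17 :
    (∀ a b : ℝ, 0 ≤ a → 0 ≤ b →
      Real.sqrt (a ^ 2 + b ^ 2) ≥ a ∧ (Real.sqrt (a ^ 2 + b ^ 2) = a ↔ b = 0)) ∧
    (∀ α₀ α t : ℝ, 0 < α₀ → α₀ < π / 2 → |α| ≤ α₀ →
      Real.sqrt (1 - Real.cos α₀ ^ 2 / Real.cos α ^ 2) + Real.cos α₀ * t ≥ 0 →
      (Real.sqrt (1 + Real.cos α ^ 2 * t ^ 2) =
          Real.sqrt (1 - Real.cos α₀ ^ 2 / Real.cos α ^ 2) + Real.cos α₀ * t ↔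
        Real.cos α₀ / Real.cos α =
          Real.sqrt (1 - Real.cos α₀ ^ 2 / Real.cos α ^ 2) * Real.cos α * t)) := by
  refine ⟨key17, ?_⟩
  intro α₀ α t hα₀ hα₀' hα ha
  set c₀ := Real.cos α₀ with hc₀def
  set c := Real.cos α with hcdef
  have hc₀pos : 0 < c₀ := Real.cos_pos_of_mem_Ioo ⟨by linarith [Real.pi_pos], hα₀'⟩
  have hcge : c₀ ≤ c := by
    have h1 : Real.cos α₀ ≤ Real.cos |α| := by
      apply Real.cos_le_cos_of_nonneg_of_le_pi (abs_nonneg α) _ hα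
      linarith [Real.pi_pos]
    rwa [Real.cos_abs] at h1
  have hcpos : 0 < c := lt_of_lt_of_le hc₀pos hcge
  have hnn : 0 ≤ 1 - c₀ ^ 2 / c ^ 2 := by
    have : c₀ ^ 2 / c ^ 2 ≤ 1 := by
      rw [div_le_one (by positivity)]; nlinarith
    linarith
  set s := Real.sqrt (1 - c₀ ^ 2 / c ^ 2) with hsdef
  have hs2 : s ^ 2 = 1 - c₀ ^ 2 / c ^ 2 := Real.sq_sqrt hnn
  have hident : 1 + c ^ 2 * t ^ 2 = (s + c₀ * t) ^ 2 + (s * c * t - c₀ / c) ^ 2 := by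
    have hcne : c ≠ 0 := ne_of_gt hcpos
    have hs2c : s ^ 2 * c ^ 2 = c ^ 2 - c₀ ^ 2 := by
      rw [hs2]; field_simp
    field_simp
    linear_combination (-(1 + c ^ 2 * t ^ 2)) * hs2c
  have key := (key17 (s + c₀ * t) |s * c * t - c₀ / c| ha (abs_nonneg _)).2
  rw [sq_abs] at key
  rw [hident, key, abs_eq_zero, sub_eq_zero]
  constructor
  · intro h; rw [← h]
  · intro h; rw [h]
end
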